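/- arXiv:2605.22883 — 3 statements merged into one kernel-verified Lean document; each statement's English description precedes it below -/
import Mathlib

section
/- Conditional attempt-count deficit under success: for every p ∈ (0,1) and every K_max ≥ 2, the success-conditioned expected attempt count is strictly smaller than the unconditional one, i.e. E[K·1_success] < π(p, K_max)·E[K], equivalently (1 − (1−p)^{K_max}·(1 + K_max·p))/p < (1 − (1−p)^{K_max})·(1 − (1−p)^{K_max})/p. -/
/-- Conditional attempt-count deficit under success: for every
`p ∈ (0,1)` and every `Kmax ≥ 2`, `E[K·1_success] < π(p, Kmax)·E[K]`,
i.e. `(1 − (1−p)^Kmax·(1 + Kmax·p))/p < (1 − (1−p)^Kmax)·(1 − (1−p)^Kmax)/p`. -/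
theorem conditional_attempt_count_deficit
    (p : ℝ) (hp0 : 0 < p) (hp1 : p < 1) (Kmax : ℕ) (hKmax : 2 ≤ Kmax) :
    (1 - (1 - p) ^ Kmax * (1 + (Kmax : ℝ) * p)) / p
      < (1 - (1 - p) ^ Kmax) * ((1 - (1 - p) ^ Kmax) / p) := by
  have hq : (0:ℝ) < 1 - p := by linarith
  have hbern : 1 + (Kmax : ℝ) * (-p) < (1 + (-p)) ^ (Kmax : ℝ) := by
    apply one_add_mul_self_lt_rpow_one_add (by linarith) (by linarith)
    exact_mod_cast lt_of_lt_of_le one_lt_two (by exact_mod_cast hKmax)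
  rw [show (1:ℝ) + (-p) = 1 - p by ring, Real.rpow_natCast] at hbern
  have hqn : (0:ℝ) < (1 - p) ^ Kmax := pow_pos hq _
  rw [mul_div_assoc', div_lt_div_iff_of_pos_right hp0]
  nlinarith [mul_pos hqn hqn]
end

section
/- Negative covariance of workflow energy and success: let (E_k)_{k≥1} be i.i.d. nonnegative integrable real random variables with mean μ_E > 0, independent of the i.i.d. Bernoulli(p) attempt-outcome sequence that determines the truncated geometric attempt count K with parameter p ∈ (0,1) and budget K_max ≥ 2. Then the total workflow energy E_wf = ∑_{k=1}^{K} E_k and the success indicator 1_success satisfy Cov(E_wf, 1_success) < 0. -/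
open MeasureTheory ProbabilityTheory
open scoped Classical

/-- Negative covariance of workflow energy and success: let
`(E_k)_{k≥1}` be i.i.d. nonnegative integrable real random variables with mean
`μE > 0`, independent of the i.i.d. Bernoulli(p) attempt-outcome sequence
`(X_k)` that determines the truncated geometric attempt count
`K = min(inf{k ≥ 1 : X_k = 1}, Kmax)` with `p ∈ (0,1)` and budget `Kmax ≥ 2`.
Then `E_wf = ∑_{k=1}^{K} E_k` and the success indicator `1_{X_K = 1}` satisfy
`Cov(E_wf, 1_success) = E[E_wf·1_success] − E[E_wf]·E[1_success] < 0`. -/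
theorem cov_workflow_energy_success_neg
    {Ω : Type*} [MeasurableSpace Ω] (μ : Measure Ω) [IsProbabilityMeasure μ]
    (p : ℝ) (hp0 : 0 < p) (hp1 : p < 1)
    (Kmax : ℕ) (hKmax : 2 ≤ Kmax)
    (μE : ℝ) (hμE : 0 < μE)
    (E : ℕ → Ω → ℝ) (X : ℕ → Ω → Bool)
    (hEmeas : ∀ k, Measurable (E k))
    (hXmeas : ∀ k, Measurable (X k))
    (hEnonneg : ∀ k ω, 0 ≤ E k ω)
    (hEint : ∀ k, Integrable (E k) μ)
    (hEident : ∀ k, IdentDistrib (E k) (E 1) μ μ)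
    (hEmean : ∫ ω, E 1 ω ∂μ = μE)
    (hEindep : iIndepFun E μ)
    (hXindep : iIndepFun X μ)
    (hXlaw : ∀ k, μ {ω | X k ω = true} = ENNReal.ofReal p)
    (hEX : IndepFun (fun ω k => E k ω) (fun ω k => X k ω) μ)
    (K : Ω → ℕ)
    (hK : ∀ ω, K ω = if h : ∃ k, 1 ≤ k ∧ X k ω = true
        then min (Nat.find h) Kmax else Kmax) :
    (∫ ω, (∑ k ∈ Finset.Icc 1 (K ω), E k ω) *
          (if X (K ω) ω = true then (1 : ℝ) else 0) ∂μ)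
      - (∫ ω, (∑ k ∈ Finset.Icc 1 (K ω), E k ω) ∂μ)
        * (∫ ω, (if X (K ω) ω = true then (1 : ℝ) else 0) ∂μ) < 0 := by
  classical
  have hq0 : (0:ℝ) < 1 - p := by linarith
  set q : ℝ := 1 - p with hqdef
  have hp' : p = 1 - q := by rw [hqdef]; ring
  have hKm1 : 1 ≤ Kmax := le_trans (by norm_num) hKmax
  have hK1 : ∀ ω, 1 ≤ K ω := by
    intro ω; rw [hK ω]
    split
    · next h => exact le_min (Nat.find_spec h).1 hKm1
    · exact hKm1
  have hKle : ∀ ω, K ω ≤ Kmax := by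
    intro ω; rw [hK ω]
    split
    · exact min_le_right _ _
    · exact le_refl _
  have hKmem : ∀ ω, K ω ∈ Finset.Icc 1 Kmax :=
    fun ω => Finset.mem_Icc.mpr ⟨hK1 ω, hKle ω⟩
  set Xv : Ω → ℕ → Bool := fun ω k => X k ω with hXv
  have hXvmeas : Measurable Xv := measurable_pi_lambda _ hXmeas
  set Sx : ℕ → Set (ℕ → Bool) :=
    fun m => {x | (∀ k ∈ Finset.Icc 1 (m-1), x k = false) ∧ x m = true} with hSxdef
  set SB : Set (ℕ → Bool) := {x | ∀ k ∈ Finset.Icc 1 (Kmax-1), x k = false} with hSBdef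
  have hSxmeas : ∀ m, MeasurableSet (Sx m) := by
    intro m
    have hEq : Sx m = (⋂ k ∈ Finset.Icc 1 (m-1), (fun x : ℕ → Bool => x k) ⁻¹' {false})
        ∩ ((fun x : ℕ → Bool => x m) ⁻¹' {true}) := by
      ext x; simp [hSxdef]
    rw [hEq]
    exact (MeasurableSet.biInter (Finset.Icc 1 (m-1)).countable_toSet
      (fun k _ => (measurable_pi_apply k) (measurableSet_singleton false))).inter
      ((measurable_pi_apply m) (measurableSet_singleton true))
  have hSBmeas : MeasurableSet SB := by
    have hEq : SB = ⋂ k ∈ Finset.Icc 1 (Kmax-1), (fun x : ℕ → Bool => x k) ⁻¹' {false} := by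
      ext x; simp [hSBdef]
    rw [hEq]
    exact MeasurableSet.biInter (Finset.Icc 1 (Kmax-1)).countable_toSet
      (fun k _ => (measurable_pi_apply k) (measurableSet_singleton false))
  -- event identifications
  have hfind : ∀ m, 1 ≤ m → m ≤ Kmax → ∀ ω,
      Xv ω ∈ Sx m ↔ (K ω = m ∧ X m ω = true) := by
    intro m hm1 hmK ω
    constructor
    · rintro ⟨hall, hm⟩
      have hm' : X m ω = true := hm
      have hex : ∃ k, 1 ≤ k ∧ X k ω = true := ⟨m, hm1, hm'⟩
      have hfm : Nat.find hex = m := by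
        have hle : Nat.find hex ≤ m := Nat.find_le ⟨hm1, hm'⟩
        rcases lt_or_eq_of_le hle with hlt | heq
        · exfalso
          have h1 := (Nat.find_spec hex).1
          have h2 := (Nat.find_spec hex).2
          have hmem : Nat.find hex ∈ Finset.Icc 1 (m-1) := Finset.mem_Icc.mpr ⟨h1, by omega⟩
          have := hall _ hmem
          simp only [hXv] at this
          rw [h2] at this; exact Bool.true_eq_false.mp this |>.elim
        · exact heq
      refine ⟨?_, hm'⟩
      rw [hK ω, dif_pos hex, hfm]
      exact min_eq_left hmK
    · rintro ⟨hKm, hm⟩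
      refine ⟨?_, hm⟩
      intro k hk
      rw [Finset.mem_Icc] at hk
      by_contra hck
      have hkt : X k ω = true := by
        revert hck; simp only [hXv]; cases (X k ω) <;> simp
      have hex : ∃ j, 1 ≤ j ∧ X j ω = true := ⟨k, hk.1, hkt⟩
      have hfle : Nat.find hex ≤ k := Nat.find_le ⟨hk.1, hkt⟩
      have : K ω ≤ m - 1 := by
        rw [hK ω, dif_pos hex]; omega
      omega
  have hBiff : ∀ ω, Xv ω ∈ SB ↔ K ω = Kmax := by
    intro ω
    constructor
    · intro hall
      rw [hK ω]
      split
      · next hex =>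
        have h1 := (Nat.find_spec hex).1
        have h2 := (Nat.find_spec hex).2
        have hnle : ¬ (Nat.find hex ≤ Kmax - 1) := by
          intro hle
          have := hall _ (Finset.mem_Icc.mpr ⟨h1, hle⟩)
          simp only [hXv] at this
          rw [h2] at this; exact (Bool.true_eq_false.mp this).elim
        omega
      · rfl
    · intro hKm k hk
      rw [Finset.mem_Icc] at hk
      by_contra hck
      have hkt : X k ω = true := by
        revert hck; simp only [hXv]; cases (X k ω) <;> simp
      have hex : ∃ j, 1 ≤ j ∧ X j ω = true := ⟨k, hk.1, hkt⟩
      have hfle : Nat.find hex ≤ k := Nat.find_le ⟨hk.1, hkt⟩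
      rw [hK ω, dif_pos hex] at hKm
      omega
  have hAK : ∀ m, 1 ≤ m → m < Kmax → ∀ ω, (Xv ω ∈ Sx m ↔ K ω = m) := by
    intro m hm1 hmK ω
    constructor
    · intro h; exact ((hfind m hm1 hmK.le ω).1 h).1
    · intro hKm
      have hXm : X m ω = true := by
        rw [hK ω] at hKm
        by_cases hex : ∃ k, 1 ≤ k ∧ X k ω = true
        · rw [dif_pos hex] at hKm
          have hfm : Nat.find hex = m := by omega
          rw [← hfm]; exact (Nat.find_spec hex).2
        · rw [dif_neg hex] at hKm; omega
      exact (hfind m hm1 hmK.le ω).2 ⟨hKm, hXm⟩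
  -- measures of atomic events
  have hXfalse : ∀ k, μ (X k ⁻¹' {false}) = ENNReal.ofReal q := by
    intro k
    have hc : X k ⁻¹' {false} = (X k ⁻¹' {true})ᶜ := by
      ext ω; simp
    have hlaw : μ (X k ⁻¹' {true}) = ENNReal.ofReal p := hXlaw k
    rw [hc, measure_compl ((hXmeas k) (measurableSet_singleton true)) (measure_ne_top μ _),
      hlaw, measure_univ, ← ENNReal.ofReal_one, ← ENNReal.ofReal_sub _ hp0.le]
  have hmeasSx : ∀ m, 1 ≤ m → μ (Xv ⁻¹' Sx m) = ENNReal.ofReal (q^(m-1) * p) := by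
    intro m hm1
    have hset : Xv ⁻¹' Sx m
        = ⋂ k ∈ Finset.Icc 1 m, X k ⁻¹' (if k = m then {true} else {false}) := by
      ext ω
      simp only [Set.mem_preimage, Set.mem_iInter, hSxdef, Set.mem_setOf_eq, hXv]
      constructor
      · rintro ⟨hall, hm⟩ k hk
        rcases Finset.mem_Icc.mp hk with ⟨h1, h2⟩
        by_cases hkm : k = m
        · subst hkm; simp [hm]
        · simp only [if_neg hkm, Set.mem_singleton_iff]
          exact hall k (Finset.mem_Icc.mpr ⟨h1, by omega⟩)
      · intro hall
        constructor
        · intro k hk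
          rcases Finset.mem_Icc.mp hk with ⟨h1, h2⟩
          have hkm : k ≠ m := by omega
          have := hall k (Finset.mem_Icc.mpr ⟨h1, by omega⟩)
          simpa [hkm] using this
        · have := hall m (Finset.mem_Icc.mpr ⟨hm1, le_refl m⟩)
          simpa using this
    rw [hset]
    rw [hXindep.meas_biInter (fun k _ =>
      ⟨if k = m then {true} else {false}, by split <;> exact measurableSet_singleton _, rfl⟩)]
    have hins : Finset.Icc 1 m = insert m (Finset.Icc 1 (m-1)) := by
      ext k; simp only [Finset.mem_Icc, Finset.mem_insert]; omega
    rw [hins, Finset.prod_insert (by simp only [Finset.mem_Icc]; omega)]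
    have hm_term : μ (X m ⁻¹' (if m = m then {true} else {false})) = ENNReal.ofReal p := by
      rw [if_pos rfl]; exact hXlaw m
    have hrest : ∏ k ∈ Finset.Icc 1 (m-1), μ (X k ⁻¹' (if k = m then {true} else {false}))
        = ENNReal.ofReal q ^ (m-1) := by
      have h1 : ∀ k ∈ Finset.Icc 1 (m-1),
          μ (X k ⁻¹' (if k = m then {true} else {false})) = ENNReal.ofReal q := by
        intro k hk
        rcases Finset.mem_Icc.mp hk with ⟨hk1, hk2⟩
        have hkm : k ≠ m := by omega
        rw [if_neg hkm]; exact hXfalse k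
      rw [Finset.prod_congr rfl h1, Finset.prod_const, Nat.card_Icc]
      norm_num
    rw [hm_term, hrest, ← ENNReal.ofReal_pow hq0.le, ← ENNReal.ofReal_mul (by positivity)]
    ring_nf
  have hmeasSB : μ (Xv ⁻¹' SB) = ENNReal.ofReal (q^(Kmax-1)) := by
    have hset : Xv ⁻¹' SB = ⋂ k ∈ Finset.Icc 1 (Kmax-1), X k ⁻¹' {false} := by
      ext ω
      simp only [Set.mem_preimage, Set.mem_iInter, hSBdef, Set.mem_setOf_eq, hXv]
      rfl
    rw [hset, hXindep.meas_biInter (fun k _ =>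
      ⟨{false}, measurableSet_singleton _, rfl⟩)]
    rw [Finset.prod_congr rfl (fun k _ => hXfalse k), Finset.prod_const, Nat.card_Icc,
      ← ENNReal.ofReal_pow hq0.le]
    norm_num
  -- integral machinery
  have hFint : ∀ m, Integrable (fun ω => ∑ k ∈ Finset.Icc 1 m, E k ω) μ :=
    fun m => integrable_finset_sum _ (fun k _ => hEint k)
  have hFmeas : ∀ m, Measurable (fun ω => ∑ k ∈ Finset.Icc 1 m, E k ω) :=
    fun m => Finset.measurable_sum _ (fun k _ => hEmeas k)
  have hFval : ∀ m : ℕ, ∫ ω, (∑ k ∈ Finset.Icc 1 m, E k ω) ∂μ = (m : ℝ) * μE := by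
    intro m
    have hEk : ∀ k : ℕ, ∫ ω, E k ω ∂μ = μE := by
      intro k; rw [← hEmean]; exact (hEident k).integral_eq
    rw [integral_finset_sum _ (fun k _ => hEint k)]
    rw [Finset.sum_congr rfl (fun k _ => hEk k)]
    rw [Finset.sum_const, Nat.card_Icc]
    simp [nsmul_eq_mul]
  have hindic : ∀ (T : Set (ℕ → Bool)), MeasurableSet T →
      ∫ ω, Set.indicator (Xv ⁻¹' T) (fun _ => (1:ℝ)) ω ∂μ = (μ (Xv ⁻¹' T)).toReal := by
    intro T hT
    rw [integral_indicator_const (1:ℝ) (hXvmeas hT)]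
    simp
    rfl
  have hprod : ∀ (m : ℕ) (T : Set (ℕ → Bool)), MeasurableSet T →
      ∫ ω, (∑ k ∈ Finset.Icc 1 m, E k ω) * Set.indicator (Xv ⁻¹' T) (fun _ => (1:ℝ)) ω ∂μ
        = ((m : ℝ) * μE) * (μ (Xv ⁻¹' T)).toReal := by
    intro m T hT
    have hgm : Measurable (Set.indicator T (fun _ : ℕ → Bool => (1:ℝ))) :=
      measurable_const.indicator hT
    have hgEq : (fun ω => Set.indicator (Xv ⁻¹' T) (fun _ => (1:ℝ)) ω)
        = (Set.indicator T (fun _ => (1:ℝ))) ∘ Xv := by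
      funext ω
      exact Set.indicator_comp_right (s := T) (g := fun _ => (1:ℝ)) Xv
    have hFm : Measurable (fun e : ℕ → ℝ => ∑ k ∈ Finset.Icc 1 m, e k) :=
      Finset.measurable_sum _ (fun k _ => measurable_pi_apply k)
    have hindep : IndepFun (fun ω => ∑ k ∈ Finset.Icc 1 m, E k ω)
        (fun ω => Set.indicator (Xv ⁻¹' T) (fun _ => (1:ℝ)) ω) μ := by
      rw [hgEq]
      exact hEX.comp hFm hgm
    have hmul := hindep.integral_mul_eq_mul_integral ((hFmeas m).aestronglyMeasurable)
      (((hgm.comp hXvmeas)).aestronglyMeasurable.congr (by rw [hgEq]))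
    rw [show (fun ω => ∑ k ∈ Finset.Icc 1 m, E k ω) *
        (fun ω => Set.indicator (Xv ⁻¹' T) (fun _ => (1:ℝ)) ω)
        = fun ω => (∑ k ∈ Finset.Icc 1 m, E k ω) *
          Set.indicator (Xv ⁻¹' T) (fun _ => (1:ℝ)) ω from rfl] at hmul
    rw [hmul, hFval m, hindic T hT]
  have hterm_int : ∀ (m : ℕ) (T : Set (ℕ → Bool)), MeasurableSet T →
      Integrable (fun ω => (∑ k ∈ Finset.Icc 1 m, E k ω) *
        Set.indicator (Xv ⁻¹' T) (fun _ => (1:ℝ)) ω) μ := by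
    intro m T hT
    have hEq : (fun ω => (∑ k ∈ Finset.Icc 1 m, E k ω) *
        Set.indicator (Xv ⁻¹' T) (fun _ => (1:ℝ)) ω)
        = Set.indicator (Xv ⁻¹' T) (fun ω => ∑ k ∈ Finset.Icc 1 m, E k ω) := by
      funext ω
      by_cases h : ω ∈ Xv ⁻¹' T <;> simp [h]
    rw [hEq]
    exact (hFint m).indicator (hXvmeas hT)
  -- the three integral identities
  have hI3 : ∫ ω, (if X (K ω) ω = true then (1:ℝ) else 0) ∂μ
      = ∑ m ∈ Finset.Icc 1 Kmax, (μ (Xv ⁻¹' Sx m)).toReal := by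
    have hpt : ∀ ω, (if X (K ω) ω = true then (1:ℝ) else 0)
        = ∑ m ∈ Finset.Icc 1 Kmax, Set.indicator (Xv ⁻¹' Sx m) (fun _ => (1:ℝ)) ω := by
      intro ω
      have hterm : ∀ m ∈ Finset.Icc 1 Kmax,
          Set.indicator (Xv ⁻¹' Sx m) (fun _ => (1:ℝ)) ω
          = if K ω = m then (if X m ω = true then (1:ℝ) else 0) else 0 := by
        intro m hm
        rcases Finset.mem_Icc.mp hm with ⟨h1, h2⟩
        by_cases hKm : K ω = m
        · by_cases hXm : X m ω = true
          · rw [Set.indicator_of_mem (show ω ∈ Xv ⁻¹' Sx m from (hfind m h1 h2 ω).2 ⟨hKm, hXm⟩), if_pos hKm, if_pos hXm]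
          · rw [Set.indicator_of_notMem (s := Xv ⁻¹' Sx m) (fun hmem => hXm ((hfind m h1 h2 ω).1 hmem).2),
              if_pos hKm, if_neg hXm]
        · rw [Set.indicator_of_notMem (s := Xv ⁻¹' Sx m) (fun hmem => hKm ((hfind m h1 h2 ω).1 hmem).1),
            if_neg hKm]
      rw [Finset.sum_congr rfl hterm, Finset.sum_ite_eq (Finset.Icc 1 Kmax) (K ω),
        if_pos (hKmem ω)]
    rw [integral_congr_ae (Filter.Eventually.of_forall hpt)]
    rw [integral_finset_sum _ (fun m _ =>
      (integrable_const (1:ℝ)).indicator (hXvmeas (hSxmeas m)))]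
    exact Finset.sum_congr rfl (fun m _ => hindic (Sx m) (hSxmeas m))
  have hI1 : ∫ ω, (∑ k ∈ Finset.Icc 1 (K ω), E k ω) *
      (if X (K ω) ω = true then (1:ℝ) else 0) ∂μ
      = ∑ m ∈ Finset.Icc 1 Kmax, ((m : ℝ) * μE) * (μ (Xv ⁻¹' Sx m)).toReal := by
    have hpt : ∀ ω, (∑ k ∈ Finset.Icc 1 (K ω), E k ω) *
        (if X (K ω) ω = true then (1:ℝ) else 0)
        = ∑ m ∈ Finset.Icc 1 Kmax, (∑ k ∈ Finset.Icc 1 m, E k ω) *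
            Set.indicator (Xv ⁻¹' Sx m) (fun _ => (1:ℝ)) ω := by
      intro ω
      have hterm : ∀ m ∈ Finset.Icc 1 Kmax,
          (∑ k ∈ Finset.Icc 1 m, E k ω) * Set.indicator (Xv ⁻¹' Sx m) (fun _ => (1:ℝ)) ω
          = if K ω = m then (∑ k ∈ Finset.Icc 1 m, E k ω) *
              (if X m ω = true then (1:ℝ) else 0) else 0 := by
        intro m hm
        rcases Finset.mem_Icc.mp hm with ⟨h1, h2⟩
        by_cases hKm : K ω = m
        · by_cases hXm : X m ω = true
          · rw [Set.indicator_of_mem (show ω ∈ Xv ⁻¹' Sx m from (hfind m h1 h2 ω).2 ⟨hKm, hXm⟩), if_pos hKm, if_pos hXm]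
          · rw [Set.indicator_of_notMem (s := Xv ⁻¹' Sx m) (fun hmem => hXm ((hfind m h1 h2 ω).1 hmem).2),
              if_pos hKm, if_neg hXm, mul_zero]
        · rw [Set.indicator_of_notMem (s := Xv ⁻¹' Sx m) (fun hmem => hKm ((hfind m h1 h2 ω).1 hmem).1),
            if_neg hKm, mul_zero]
      rw [Finset.sum_congr rfl hterm, Finset.sum_ite_eq (Finset.Icc 1 Kmax) (K ω),
        if_pos (hKmem ω)]
    rw [integral_congr_ae (Filter.Eventually.of_forall hpt)]
    rw [integral_finset_sum _ (fun m _ => hterm_int m (Sx m) (hSxmeas m))]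
    exact Finset.sum_congr rfl (fun m _ => hprod m (Sx m) (hSxmeas m))
  have hI2 : ∫ ω, (∑ k ∈ Finset.Icc 1 (K ω), E k ω) ∂μ
      = ∑ m ∈ Finset.Icc 1 Kmax, ((m : ℝ) * μE) *
          (μ (Xv ⁻¹' (if m = Kmax then SB else Sx m))).toReal := by
    have hiff : ∀ m ∈ Finset.Icc 1 Kmax, ∀ ω,
        (ω ∈ Xv ⁻¹' (if m = Kmax then SB else Sx m)) ↔ K ω = m := by
      intro m hm ω
      rcases Finset.mem_Icc.mp hm with ⟨h1, h2⟩
      by_cases hm' : m = Kmax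
      · subst hm'; rw [if_pos rfl]; exact hBiff ω
      · rw [if_neg hm']; exact hAK m h1 (lt_of_le_of_ne h2 hm') ω
    have hCmeas : ∀ m, MeasurableSet (if m = Kmax then SB else Sx m) := by
      intro m; split
      · exact hSBmeas
      · exact hSxmeas m
    have hpt : ∀ ω, (∑ k ∈ Finset.Icc 1 (K ω), E k ω)
        = ∑ m ∈ Finset.Icc 1 Kmax, (∑ k ∈ Finset.Icc 1 m, E k ω) *
            Set.indicator (Xv ⁻¹' (if m = Kmax then SB else Sx m)) (fun _ => (1:ℝ)) ω := by
      intro ω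
      have hterm : ∀ m ∈ Finset.Icc 1 Kmax,
          (∑ k ∈ Finset.Icc 1 m, E k ω) *
            Set.indicator (Xv ⁻¹' (if m = Kmax then SB else Sx m)) (fun _ => (1:ℝ)) ω
          = if K ω = m then (∑ k ∈ Finset.Icc 1 m, E k ω) else 0 := by
        intro m hm
        by_cases hKm : K ω = m
        · rw [Set.indicator_of_mem ((hiff m hm ω).2 hKm), if_pos hKm, mul_one]
        · rw [Set.indicator_of_notMem (fun h => hKm ((hiff m hm ω).1 h)), if_neg hKm, mul_zero]
      rw [Finset.sum_congr rfl hterm, Finset.sum_ite_eq (Finset.Icc 1 Kmax) (K ω),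
        if_pos (hKmem ω)]
    rw [integral_congr_ae (Filter.Eventually.of_forall hpt)]
    rw [integral_finset_sum _ (fun m _ => hterm_int m _ (hCmeas m))]
    exact Finset.sum_congr rfl (fun m _ => hprod m _ (hCmeas m))
  -- replace measures by explicit values
  have e1 : ∑ m ∈ Finset.Icc 1 Kmax, ((m : ℝ) * μE) * (μ (Xv ⁻¹' Sx m)).toReal
      = ∑ m ∈ Finset.Icc 1 Kmax, ((m : ℝ) * μE) * (q^(m-1) * p) :=
    Finset.sum_congr rfl (fun m hm => by
      rcases Finset.mem_Icc.mp hm with ⟨h1, _⟩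
      rw [hmeasSx m h1, ENNReal.toReal_ofReal (by positivity)])
  have e2 : ∑ m ∈ Finset.Icc 1 Kmax, ((m : ℝ) * μE) *
        (μ (Xv ⁻¹' (if m = Kmax then SB else Sx m))).toReal
      = ∑ m ∈ Finset.Icc 1 Kmax, ((m : ℝ) * μE) *
        (if m = Kmax then q^(Kmax-1) else q^(m-1) * p) :=
    Finset.sum_congr rfl (fun m hm => by
      rcases Finset.mem_Icc.mp hm with ⟨h1, _⟩
      by_cases hm' : m = Kmax
      · rw [if_pos hm', if_pos hm', hmeasSB, ENNReal.toReal_ofReal (by positivity)]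
      · rw [if_neg hm', if_neg hm', hmeasSx m h1, ENNReal.toReal_ofReal (by positivity)])
  have e3 : ∑ m ∈ Finset.Icc 1 Kmax, (μ (Xv ⁻¹' Sx m)).toReal
      = ∑ m ∈ Finset.Icc 1 Kmax, (q^(m-1) * p) :=
    Finset.sum_congr rfl (fun m hm => by
      rcases Finset.mem_Icc.mp hm with ⟨h1, _⟩
      rw [hmeasSx m h1, ENNReal.toReal_ofReal (by positivity)])
  -- geometric identity
  have hgeo : ∀ n : ℕ, (∑ m ∈ Finset.Icc 1 n, q^(m-1) * p) + q^n = 1 := by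
    intro n
    induction n with
    | zero => simp
    | succ n ih =>
      rw [Finset.sum_Icc_succ_top (by omega : 1 ≤ n + 1)]
      simp only [Nat.add_sub_cancel]
      linear_combination ih + q^n * hp'
  rw [hI1, hI2, hI3, e1, e2, e3]
  obtain ⟨j, rfl⟩ : ∃ j, Kmax = j + 1 := ⟨Kmax - 1, by omega⟩
  have hj1 : 1 ≤ j := by omega
  rw [Finset.sum_Icc_succ_top (by omega : 1 ≤ j + 1),
      Finset.sum_Icc_succ_top (by omega : 1 ≤ j + 1),
      Finset.sum_Icc_succ_top (by omega : 1 ≤ j + 1)]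
  simp only [Nat.add_sub_cancel, if_pos rfl]
  have e4 : ∑ m ∈ Finset.Icc 1 j, ((m:ℝ)*μE) * (if m = j+1 then q^j else q^(m-1)*p)
      = ∑ m ∈ Finset.Icc 1 j, ((m:ℝ)*μE) * (q^(m-1)*p) :=
    Finset.sum_congr rfl (fun m hm => by
      rcases Finset.mem_Icc.mp hm with ⟨_, h2⟩
      rw [if_neg (by omega)])
  rw [e4]
  have e5 : ∑ m ∈ Finset.Icc 1 j, ((m:ℝ)*μE) * (q^(m-1)*p)
      = μE * ∑ m ∈ Finset.Icc 1 j, (m:ℝ) * (q^(m-1)*p) := by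
    rw [Finset.mul_sum]
    exact Finset.sum_congr rfl (fun m _ => by ring)
  rw [e5]
  set A : ℝ := ∑ m ∈ Finset.Icc 1 j, (m:ℝ) * (q^(m-1)*p) with hAdef
  set S1 : ℝ := ∑ m ∈ Finset.Icc 1 j, q^(m-1)*p with hS1def
  have hS1 : S1 = 1 - q^j := by have := hgeo j; rw [hS1def]; linarith
  have hApos : ∀ m ∈ Finset.Icc 1 j, (m:ℝ) * (q^(m-1)*p) < ((j:ℝ)+1) * (q^(m-1)*p) := by
    intro m hm
    rcases Finset.mem_Icc.mp hm with ⟨h1, h2⟩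
    have hmj : (m:ℝ) < (j:ℝ)+1 := by exact_mod_cast Nat.lt_succ_of_le h2
    exact mul_lt_mul_of_pos_right hmj (by positivity)
  have hA : A < ((j:ℝ)+1) * S1 := by
    rw [hAdef, hS1def, Finset.mul_sum]
    exact Finset.sum_lt_sum_of_nonempty (Finset.nonempty_Icc.mpr hj1) hApos
  have hqj : (0:ℝ) < q ^ j := pow_pos hq0 j
  have hA' : A - ((j:ℝ)+1) * (1 - q^j) < 0 := by rw [← hS1]; linarith
  have hkey := mul_neg_of_pos_of_neg (mul_pos (mul_pos hμE hqj) hq0) hA'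
  push_cast
  rw [hp', hS1]
  linarith [hkey]
end

section
/- Jensen-type lower bound on population EpG over a task mixture: let P be a random variable taking values in (0,1] with 1/P integrable, let K_max ≥ 1, and let μ_E > 0 be constant. Then E[(1 − (1−P)^{K_max})/P] · E[P] ≥ E[1 − (1−P)^{K_max}]; consequently the mixture EpG satisfies EpG* = μ_E · E[(1 − (1−P)^{K_max})/P] / E[1 − (1−P)^{K_max}] ≥ μ_E / E[P]. -/
/-!
The success probability is `g P * P` with `g p = (1 - (1 - p) ^ K) / p = ∑ i < K, (1 - p) ^ i`,
which is antitone on `(0, 1]`. Chebyshev's inequality for the oppositely ordered pair `g P`, `P`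
gives `E[g P * P] ≤ E[g P] * E[P]`, the first claim; the EpG bound follows by dividing by
`E[1 - (1 - P) ^ K] ≥ E[P] > 0`.
-/

open MeasureTheory ProbabilityTheory

section ProbabilityMeasure

variable {Ω : Type*} [MeasurableSpace Ω] {μ : Measure Ω} [IsProbabilityMeasure μ]

theorem integral_mem_Ioc_of_forall_mem_Ioc {X : Ω → ℝ} {a b : ℝ} (hXi : Integrable X μ)
    (hX : ∀ ω, X ω ∈ Set.Ioc a b) : ∫ ω, X ω ∂μ ∈ Set.Ioc a b := by
  have hXa : 0 < ∫ ω, (X ω - a) ∂μ := by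
    rw [integral_pos_iff_support_of_nonneg (fun ω => (sub_pos.2 (hX ω).1).le)
      (hXi.sub (integrable_const a))]
    have : Function.support (fun ω => X ω - a) = Set.univ :=
      Set.eq_univ_of_forall fun ω => (sub_pos.2 (hX ω).1).ne'
    simp [this]
  have hXb : ∫ ω, X ω ∂μ ≤ ∫ _, b ∂μ :=
    integral_mono hXi (integrable_const b) fun ω => (hX ω).2
  rw [integral_sub hXi (integrable_const a)] at hXa
  simp only [integral_const, probReal_univ, one_smul] at hXa hXb
  exact ⟨sub_pos.1 hXa, hXb⟩

/-- Chebyshev's inequality. Since the mean `m` of `X` lies in `s`, one can compare with `h m`: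
the pointwise bound `(h (X ω) - h m) * (X ω - m) ≤ 0` integrates to the claim, with no need for
the usual double integral. -/
theorem integral_comp_mul_le_of_antitoneOn {X : Ω → ℝ} {h : ℝ → ℝ} {s : Set ℝ}
    (hh : AntitoneOn h s) (hX : ∀ ω, X ω ∈ s) (hmean : ∫ ω, X ω ∂μ ∈ s)
    (hXi : Integrable X μ) (hhXi : Integrable (fun ω => h (X ω)) μ)
    (hprodi : Integrable (fun ω => h (X ω) * X ω) μ) :
    ∫ ω, h (X ω) * X ω ∂μ ≤ (∫ ω, h (X ω) ∂μ) * ∫ ω, X ω ∂μ := by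
  set m := ∫ ω, X ω ∂μ
  have hpointwise : ∀ ω, (h (X ω) - h m) * (X ω - m) ≤ 0 := fun ω => by
    rcases le_total (X ω) m with hle | hle
    · exact mul_nonpos_of_nonneg_of_nonpos (sub_nonneg.2 (hh (hX ω) hmean hle))
        (sub_nonpos.2 hle)
    · exact mul_nonpos_of_nonpos_of_nonneg (sub_nonpos.2 (hh hmean (hX ω) hle))
        (sub_nonneg.2 hle)
  have hmul_sub : ∀ ω, h (X ω) * X ω - m * h (X ω) ≤ h m * (X ω - m) := fun ω => by
    linarith [hpointwise ω]
  suffices ∫ ω, h (X ω) * X ω ∂μ - (∫ ω, h (X ω) ∂μ) * m ≤ 0 by linarith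
  calc ∫ ω, h (X ω) * X ω ∂μ - (∫ ω, h (X ω) ∂μ) * m
      = ∫ ω, (h (X ω) * X ω - m * h (X ω)) ∂μ := by
        rw [integral_sub hprodi (hhXi.const_mul m), integral_const_mul, mul_comm]
    _ ≤ ∫ ω, h m * (X ω - m) ∂μ := integral_mono (hprodi.sub (hhXi.const_mul m))
        ((hXi.sub (integrable_const m)).const_mul _) hmul_sub
    _ = 0 := by
        rw [integral_const_mul, integral_sub hXi (integrable_const m), integral_const]
        simp [m]

end ProbabilityMeasure

theorem one_sub_one_sub_pow_div_eq_geom_sum {p : ℝ} (hp : p ≠ 0) (n : ℕ) :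
    (1 - (1 - p) ^ n) / p = ∑ i ∈ Finset.range n, (1 - p) ^ i := by
  rw [geom_sum_eq (by simpa using hp), sub_sub_cancel_left, div_neg, ← neg_div, neg_sub]

theorem antitoneOn_one_sub_one_sub_pow_div (n : ℕ) :
    AntitoneOn (fun p : ℝ => (1 - (1 - p) ^ n) / p) (Set.Ioc 0 1) := by
  intro p hp q hq hpq
  simp only [one_sub_one_sub_pow_div_eq_geom_sum hp.1.ne',
    one_sub_one_sub_pow_div_eq_geom_sum hq.1.ne']
  exact Finset.sum_le_sum fun i _ =>
    pow_le_pow_left₀ (sub_nonneg.2 hq.2) (sub_le_sub_left hpq 1) i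

theorem one_sub_one_sub_pow_mem_Icc {p : ℝ} (hp : p ∈ Set.Ioc 0 1) {n : ℕ} (hn : 1 ≤ n) :
    1 - (1 - p) ^ n ∈ Set.Icc p 1 := by
  have h0 : 0 ≤ 1 - p := sub_nonneg.2 hp.2
  have hle : (1 - p) ^ n ≤ 1 - p := by
    simpa using pow_le_pow_of_le_one h0 (by linarith [hp.1]) hn
  exact ⟨by linarith, by linarith [pow_nonneg h0 n]⟩

/-- Jensen-type lower bound on population EpG over a task
mixture: let `P` be a random variable taking values in `(0,1]` with `1/P`
integrable, let `Kmax ≥ 1`, and let `μE > 0` be constant. Then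
`E[(1 − (1−P)^Kmax)/P] · E[P] ≥ E[1 − (1−P)^Kmax]`; consequently the mixture
EpG satisfies
`EpG* = μE · E[(1 − (1−P)^Kmax)/P] / E[1 − (1−P)^Kmax] ≥ μE / E[P]`. -/
theorem jensen_epg_lower_bound
    {Ω : Type*} [MeasurableSpace Ω] (μ : Measure Ω) [IsProbabilityMeasure μ]
    (P : Ω → ℝ) (hPmeas : Measurable P)
    (hPmem : ∀ ω, P ω ∈ Set.Ioc (0 : ℝ) 1)
    (hPinv : Integrable (fun ω => 1 / P ω) μ)
    (Kmax : ℕ) (hKmax : 1 ≤ Kmax)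
    (μE : ℝ) (hμE : 0 < μE) :
    (∫ ω, (1 - (1 - P ω) ^ Kmax) / P ω ∂μ) * (∫ ω, P ω ∂μ)
        ≥ ∫ ω, (1 - (1 - P ω) ^ Kmax) ∂μ ∧
    μE * (∫ ω, (1 - (1 - P ω) ^ Kmax) / P ω ∂μ)
        / (∫ ω, (1 - (1 - P ω) ^ Kmax) ∂μ)
      ≥ μE / ∫ ω, P ω ∂μ := by
  have hsucc : ∀ ω, 1 - (1 - P ω) ^ Kmax ∈ Set.Icc (P ω) 1 :=
    fun ω => one_sub_one_sub_pow_mem_Icc (hPmem ω) hKmax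
  have hsuccMeas : Measurable fun ω => 1 - (1 - P ω) ^ Kmax := by fun_prop
  have hPi : Integrable P μ := .of_mem_Icc 0 1 hPmeas.aemeasurable
    (.of_forall fun ω => Set.Ioc_subset_Icc_self (hPmem ω))
  have hsucci : Integrable (fun ω => 1 - (1 - P ω) ^ Kmax) μ :=
    .of_mem_Icc 0 1 hsuccMeas.aemeasurable
      (.of_forall fun ω => ⟨(hPmem ω).1.le.trans (hsucc ω).1, (hsucc ω).2⟩)
  have heffi : Integrable (fun ω => (1 - (1 - P ω) ^ Kmax) / P ω) μ :=
    hPinv.mono (hsuccMeas.div hPmeas).aestronglyMeasurable <| .of_forall fun ω => by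
      have hP := (hPmem ω).1
      rw [Real.norm_of_nonneg (div_nonneg (hP.le.trans (hsucc ω).1) hP.le),
        Real.norm_of_nonneg (one_div_pos.2 hP).le]
      exact div_le_div_of_nonneg_right (hsucc ω).2 hP.le
  have hmean := integral_mem_Ioc_of_forall_mem_Ioc hPi hPmem
  have hcancel : ∀ ω, (1 - (1 - P ω) ^ Kmax) / P ω * P ω = 1 - (1 - P ω) ^ Kmax :=
    fun ω => div_mul_cancel₀ _ (hPmem ω).1.ne'
  have hcheb := integral_comp_mul_le_of_antitoneOn (antitoneOn_one_sub_one_sub_pow_div Kmax)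
    hPmem hmean hPi heffi (by simpa only [hcancel] using hsucci)
  simp only [hcancel] at hcheb
  have hsuccPos : 0 < ∫ ω, (1 - (1 - P ω) ^ Kmax) ∂μ :=
    hmean.1.trans_le (integral_mono hPi hsucci fun ω => (hsucc ω).1)
  refine ⟨hcheb, ?_⟩
  rw [ge_iff_le, div_le_div_iff₀ hmean.1 hsuccPos, mul_assoc]
  exact mul_le_mul_of_nonneg_left hcheb hμE.le
end
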